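/- arXiv:2110.14167 — 2 statements merged into one kernel-verified Lean document; each statement's English description precedes it below -/
import Mathlib

section
/- If h = f ⋆_c g is the canonical convolution of f, g ∈ L²(ℝ²), then the 2D non-separable LCT of h satisfies (L_M h)(ξ) = e^{-iπ ξᵀDB⁻¹ξ} (L_M f)(ξ) (L_M g)(ξ) for all ξ ∈ ℝ². -/
open MeasureTheory Matrix Complex

noncomputable section

abbrev V2 : Type := Fin 2 → ℝ
abbrev Z2 : Type := Fin 2 → ℤ
abbrev M2 : Type := Matrix (Fin 2) (Fin 2) ℝ

/-- cast an integer vector to a real vector -/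
def zc (k : Z2) : V2 := fun i => (k i : ℝ)

/-- `ePi r = e^{iπ r}` -/
def ePi (r : ℝ) : ℂ := Complex.exp (Real.pi * Complex.I * r)

/-- quadratic/bilinear form `xᵀ P y` -/
def Q (P : M2) (x y : V2) : ℝ := x ⬝ᵥ P.mulVec y

/-- `√(det (iB))` (note `det(iB) = i² det B` for 2×2 `B`) -/
def sdet (B : M2) : ℂ := ((Complex.I ^ 2 * (B.det : ℂ))) ^ ((1 : ℂ)/2)

/-- the chirp `λ_M(t) = e^{iπ tᵀB⁻¹At}` -/
def lam (A B : M2) (t : V2) : ℂ := ePi (Q (B⁻¹ * A) t t)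

/-- the continuous 2D non-separable LCT -/
def LCT (A B D : M2) (f : V2 → ℂ) (ξ : V2) : ℂ :=
  (sdet B)⁻¹ * ∫ u : V2, f u * ePi (Q (B⁻¹ * A) u u - 2 * Q B⁻¹ u ξ + Q (D * B⁻¹) ξ ξ)

/-- the 2D discrete-time non-separable LCT -/
def DLCT (A B D : M2) (s : Z2 → ℂ) (ξ : V2) : ℂ :=
  (sdet B)⁻¹ * ∑' k : Z2,
    s k * ePi (Q (B⁻¹ * A) (zc k) (zc k) - 2 * Q B⁻¹ (zc k) ξ + Q (D * B⁻¹) ξ ξ)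

/-- the canonical (continuous) convolution `⋆_c` -/
def cconv (A B : M2) (f g : V2 → ℂ) (t : V2) : ℂ :=
  ePi (-(Q (B⁻¹ * A) t t)) * (sdet B)⁻¹ *
    ∫ x : V2, lam A B (t - x) * f (t - x) * (lam A B x * g x)

/-- the canonical semi-discrete convolution `⋆_{sd}` -/
def sdconv (A B : M2) (s : Z2 → ℂ) (g : V2 → ℂ) (t : V2) : ℂ :=
  ePi (-(Q (B⁻¹ * A) t t)) * (sdet B)⁻¹ *
    ∑' k : Z2, lam A B (zc k) * s k * (lam A B (t - zc k) * g (t - zc k))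

/-- the canonical discrete convolution `⋆_d` -/
def dconv (A B : M2) (s c : Z2 → ℂ) (l : Z2) : ℂ :=
  ePi (-(Q (B⁻¹ * A) (zc l) (zc l))) * (sdet B)⁻¹ *
    ∑' k : Z2, lam A B (zc k) * s k * (lam A B (zc (l - k)) * c (l - k))

/-- symplecticity of the block matrix `[A,B;C,D]` -/
def Symp (A B C D : M2) : Prop :=
  A * Bᵀ = B * Aᵀ ∧ C * Dᵀ = D * Cᵀ ∧ A * Dᵀ - B * Cᵀ = 1

/-- the unit half-open square `[0,1)²` -/
def box : Set V2 := Set.univ.pi fun _ => Set.Ico (0:ℝ) 1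

/-- real cast of an integer matrix -/
def Mr (M : Matrix (Fin 2) (Fin 2) ℤ) : M2 := M.map (Int.cast : ℤ → ℝ)

/-- the set `N(M)` of integer points in the fundamental parallelepiped -/
def NM (M : Matrix (Fin 2) (Fin 2) ℤ) : Set Z2 :=
  {k : Z2 | ∃ x : V2, x ∈ box ∧ zc k = (Mr M).mulVec x}

/-- the discrete time Fourier transform -/
def DTFT (d : Z2 → ℂ) (ξ : V2) : ℂ := ∑' k : Z2, d k * ePi (-(2 * (zc k ⬝ᵥ ξ)))

/-!
Write the LCT kernel as `e^{iπ ξᵀDB⁻¹ξ} κ_ξ(u)` with `κ_ξ(u) = λ_M(u) e^{-2iπ uᵀB⁻¹ξ}`.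
Multiplying `f ⋆_c g` by `κ_ξ` turns it into `(det iB)^{-1/2}` times the ordinary convolution of
`κ_ξ g` with `κ_ξ f`, and the integral of an ordinary convolution of integrable functions is the
product of the integrals (Fubini).
-/

open Convolution

lemma ePi_add (a b : ℝ) : ePi (a + b) = ePi a * ePi b := by
  simp only [ePi, ← Complex.exp_add]
  push_cast
  ring_nf

lemma ePi_neg_mul_self (r : ℝ) : ePi (-r) * ePi r = 1 := by
  rw [← ePi_add, neg_add_cancel, ePi, Complex.ofReal_zero, mul_zero, Complex.exp_zero]

lemma norm_ePi (r : ℝ) : ‖ePi r‖ = 1 := by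
  simp [ePi, Complex.norm_exp]

lemma Q_sub_left (P : M2) (t x ξ : V2) : Q P (t - x) ξ = Q P t ξ - Q P x ξ := by
  simp [Q, sub_dotProduct]

def lctKernel (A B : M2) (ξ u : V2) : ℂ := ePi (Q (B⁻¹ * A) u u - 2 * Q B⁻¹ u ξ)

lemma continuous_lctKernel (A B : M2) (ξ : V2) : Continuous (lctKernel A B ξ) := by
  unfold lctKernel ePi Q
  simp only [dotProduct, Matrix.mulVec]
  fun_prop

lemma MeasureTheory.Integrable.lctKernel_mul {A B : M2} {ξ : V2} {h : V2 → ℂ}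
    (hh : Integrable h) :
    Integrable fun u => lctKernel A B ξ u * h u :=
  hh.bdd_mul (continuous_lctKernel A B ξ).aestronglyMeasurable
    (Filter.Eventually.of_forall fun _ => (norm_ePi _).le)

lemma LCT_eq_integral_lctKernel_mul (A B D : M2) (h : V2 → ℂ) (ξ : V2) :
    LCT A B D h ξ =
      (sdet B)⁻¹ * ePi (Q (D * B⁻¹) ξ ξ) * ∫ u, lctKernel A B ξ u * h u := by
  simp only [LCT, lctKernel, ePi_add, ← integral_const_mul]
  congr 1
  ext u
  ring

/-- The plane-wave factor `e^{-2iπ uᵀB⁻¹ξ}` of the kernel is a character in `u`, so only the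
chirps need correcting. -/
lemma lctKernel_sub_mul_lctKernel (A B : M2) (ξ t x : V2) :
    lctKernel A B ξ (t - x) * lctKernel A B ξ x =
      lctKernel A B ξ t * ePi (-(Q (B⁻¹ * A) t t)) * (lam A B (t - x) * lam A B x) := by
  simp only [lctKernel, lam, ← ePi_add, Q_sub_left B⁻¹]
  ring_nf

lemma lctKernel_mul_cconv (A B : M2) (f g : V2 → ℂ) (ξ t : V2) :
    lctKernel A B ξ t * cconv A B f g t =
      (sdet B)⁻¹ * ((fun u => lctKernel A B ξ u * g u) ⋆[ContinuousLinearMap.mul ℝ ℂ]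
        (fun u => lctKernel A B ξ u * f u)) t := by
  simp only [cconv, convolution_def, ContinuousLinearMap.mul_apply', ← integral_const_mul]
  congr 1
  ext x
  linear_combination (-(sdet B)⁻¹ * f (t - x) * g x) * lctKernel_sub_mul_lctKernel A B ξ t x

theorem lct_cconv_general (A B D : M2)
    (f g : V2 → ℂ) (hf : Integrable f) (hg : Integrable g) :
    ∀ ξ : V2, LCT A B D (cconv A B f g) ξ =
      ePi (-(Q (D * B⁻¹) ξ ξ)) * LCT A B D f ξ * LCT A B D g ξ := by
  intro ξ
  simp only [LCT_eq_integral_lctKernel_mul, lctKernel_mul_cconv, integral_const_mul,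
    integral_convolution _ hg.lctKernel_mul hf.lctKernel_mul, ContinuousLinearMap.mul_apply']
  linear_combination (-(sdet B)⁻¹ ^ 2 * ePi (Q (D * B⁻¹) ξ ξ) *
    (∫ u, lctKernel A B ξ u * f u) * ∫ u, lctKernel A B ξ u * g u) *
    ePi_neg_mul_self (Q (D * B⁻¹) ξ ξ)

/-- Canonical convolution theorem for the 2D non-separable LCT:
`L_M (f ⋆_c g) (ξ) = e^{-iπ ξᵀDB⁻¹ξ} (L_M f)(ξ) (L_M g)(ξ)`. -/
theorem lct_cconv (A B C D : M2) (hSymp : Symp A B C D) (hB : B.det ≠ 0)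
    (f g : V2 → ℂ) (hf : Integrable f) (hg : Integrable g)
    (hfg : Integrable (cconv A B f g)) :
    ∀ ξ : V2, LCT A B D (cconv A B f g) ξ =
      ePi (-(Q (D * B⁻¹) ξ ξ)) * LCT A B D f ξ * LCT A B D g ξ :=
  lct_cconv_general A B D f g hf hg
end
end

section
/- (Associativity/commutation of canonical convolutions) For a sequence s ∈ l¹(ℤ²) and functions f, g ∈ L¹(ℝ²) ∩ L²(ℝ²), the canonical continuous and semi-discrete convolutions commute: f ⋆_c (s ⋆_{sd} g) = s ⋆_{sd} (f ⋆_c g). -/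
open MeasureTheory Matrix Complex

noncomputable section

/-! Multiplying by the unimodular chirp `λ_M` turns both canonical convolutions into ordinary
ones, up to the factor `1 / √det(iB)`: `λ_M (f ⋆_c g) = (λ_M f) * (λ_M g)` and
`λ_M (s ⋆_sd g) = ∑ₖ (λ_M s)(k) (λ_M g)(· - k)`. The theorem is then the interchange of the
convolution integral with an `ℓ¹`-sum of translates, which is justified because, by
Cauchy–Schwarz and translation invariance, `∫ |f (t - x)| |g (x - a)| dx ≤ ‖f‖₂ ‖g‖₂` uniformly
in `t` and `a`. -/

section TranslateConvolution

variable {G 𝕜 : Type*} [AddCommGroup G] [MeasurableSpace G] [MeasurableAdd G] [MeasurableNeg G]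
  {μ : Measure G} [μ.IsAddLeftInvariant] [μ.IsNegInvariant]
  [RCLike 𝕜] {f g : G → 𝕜}

theorem lintegral_enorm_mul_translate_le (hf : AEStronglyMeasurable f μ)
    (hg : AEStronglyMeasurable g μ) (t a : G) :
    ∫⁻ x, ‖f (t - x) * g (x - a)‖ₑ ∂μ ≤ eLpNorm f 2 μ * eLpNorm g 2 μ := by
  have hf' : MeasurePreserving (t - ·) μ μ := Measure.measurePreserving_sub_left μ t
  have hg' : MeasurePreserving (· - a) μ μ := measurePreserving_sub_right μ a
  rw [← eLpNorm_one_eq_lintegral_enorm, ← eLpNorm_comp_measurePreserving hf hf',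
    ← eLpNorm_comp_measurePreserving hg hg']
  simpa using eLpNorm_le_eLpNorm_mul_eLpNorm_of_nnnorm (p := 2) (q := 2) (r := 1)
    (hf.comp_measurePreserving hf') (hg.comp_measurePreserving hg') (· * ·) 1
    (.of_forall fun x => by simp [nnnorm_mul])

theorem integral_mul_tsum_translate {ι : Type*} [Countable ι] (hf : MemLp f 2 μ)
    (hg : MemLp g 2 μ) {w : ι → 𝕜} (hw : Summable (‖w ·‖)) (a : ι → G) (t : G) :
    ∫ x, f (t - x) * ∑' k, w k * g (x - a k) ∂μ = ∑' k, w k * ∫ x, f (t - a k - x) * g x ∂μ := by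
  have hmeas (k : ι) : AEStronglyMeasurable (fun x => f (t - x) * (w k * g (x - a k))) μ :=
    (hf.1.comp_measurePreserving (Measure.measurePreserving_sub_left μ t)).mul
      (aestronglyMeasurable_const.mul
        (hg.1.comp_measurePreserving (measurePreserving_sub_right μ (a k))))
  have hbound : ∑' k, ∫⁻ x, ‖f (t - x) * (w k * g (x - a k))‖ₑ ∂μ ≠ ⊤ := by
    have hterm (k : ι) : ∫⁻ x, ‖f (t - x) * (w k * g (x - a k))‖ₑ ∂μ ≤
        ‖w k‖ₑ * (eLpNorm f 2 μ * eLpNorm g 2 μ) := by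
      simp_rw [mul_left_comm (f _), enorm_mul (w k)]
      rw [lintegral_const_mul' _ _ enorm_ne_top]
      gcongr
      exact lintegral_enorm_mul_translate_le hf.1 hg.1 t (a k)
    refine ne_top_of_le_ne_top ?_ (ENNReal.tsum_le_tsum hterm)
    rw [ENNReal.tsum_mul_right]
    exact ENNReal.mul_ne_top (tsum_enorm_ne_top_iff_summable_norm.2 hw)
      (ENNReal.mul_ne_top hf.2.ne hg.2.ne)
  simp_rw [← tsum_mul_left, integral_tsum hmeas hbound, mul_left_comm (f _), integral_const_mul]
  refine tsum_congr fun k => congrArg (w k * ·) ?_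
  simpa only [sub_sub_sub_cancel_right] using
    integral_sub_right_eq_self (fun y => f (t - a k - y) * g y) (a k) (μ := μ)

end TranslateConvolution

theorem ePi_mul_ePi_neg (r : ℝ) : ePi r * ePi (-r) = 1 := by
  rw [ePi, ePi, ← Complex.exp_add, Complex.ofReal_neg, mul_neg, add_neg_cancel, Complex.exp_zero]

theorem norm_lam (A B : M2) (x : V2) : ‖lam A B x‖ = 1 := by
  simp [lam, ePi, Complex.norm_exp]

theorem continuous_lam (A B : M2) : Continuous (lam A B) := by
  unfold lam ePi Q Matrix.mulVec dotProduct
  fun_prop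

theorem MeasureTheory.MemLp.lam_mul {p : ENNReal} {f : V2 → ℂ} (hf : MemLp f p) (A B : M2) :
    MemLp (fun x => lam A B x * f x) p :=
  (memLp_congr_norm ((continuous_lam A B).aestronglyMeasurable.mul hf.1) hf.1
    (.of_forall fun x => by simp [norm_lam])).2 hf

theorem lam_mul_cconv (A B : M2) (f g : V2 → ℂ) (t : V2) :
    lam A B t * cconv A B f g t =
      (sdet B)⁻¹ * ∫ x, lam A B (t - x) * f (t - x) * (lam A B x * g x) := by
  rw [cconv, ← mul_assoc, ← mul_assoc, lam, ePi_mul_ePi_neg, one_mul]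

theorem lam_mul_sdconv (A B : M2) (s : Z2 → ℂ) (g : V2 → ℂ) (t : V2) :
    lam A B t * sdconv A B s g t =
      (sdet B)⁻¹ * ∑' k, lam A B (zc k) * s k * (lam A B (t - zc k) * g (t - zc k)) := by
  rw [sdconv, ← mul_assoc, ← mul_assoc, lam, ePi_mul_ePi_neg, one_mul]

theorem cconv_sdconv_comm_general (A B : M2) (s : Z2 → ℂ) (hs : Summable fun k => ‖s k‖)
    (f g : V2 → ℂ) (hf2 : MemLp f 2) (hg2 : MemLp g 2) :
    ∀ t : V2, cconv A B f (sdconv A B s g) t = sdconv A B s (cconv A B f g) t := by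
  intro t
  have hs' : Summable fun k => ‖lam A B (zc k) * s k‖ := by simpa [norm_lam] using hs
  calc cconv A B f (sdconv A B s g) t
      = ePi (-(Q (B⁻¹ * A) t t)) * (sdet B)⁻¹ * ((sdet B)⁻¹ *
          ∫ x, lam A B (t - x) * f (t - x) *
            ∑' k, lam A B (zc k) * s k * (lam A B (x - zc k) * g (x - zc k))) := by
        rw [cconv]
        congr 1
        rw [← integral_const_mul]
        congr 1 with x
        rw [lam_mul_sdconv]
        ring
    _ = ePi (-(Q (B⁻¹ * A) t t)) * (sdet B)⁻¹ *
          ∑' k, lam A B (zc k) * s k * (lam A B (t - zc k) * cconv A B f g (t - zc k)) := by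
        rw [integral_mul_tsum_translate (hf2.lam_mul A B) (hg2.lam_mul A B) hs' zc t]
        congr 1
        rw [← tsum_mul_left]
        congr 1 with k
        rw [lam_mul_cconv]
        ring
    _ = sdconv A B s (cconv A B f g) t := rfl

/-- The canonical continuous and semi-discrete convolutions commute:
`f ⋆_c (s ⋆_{sd} g) = s ⋆_{sd} (f ⋆_c g)`. -/
theorem cconv_sdconv_comm (A B C D : M2) (hSymp : Symp A B C D) (hB : B.det ≠ 0)
    (s : Z2 → ℂ) (hs : Summable fun k => ‖s k‖)
    (f g : V2 → ℂ) (hf1 : Integrable f) (hf2 : MemLp f 2)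
    (hg1 : Integrable g) (hg2 : MemLp g 2) :
    ∀ t : V2, cconv A B f (sdconv A B s g) t = sdconv A B s (cconv A B f g) t :=
  cconv_sdconv_comm_general A B s hs f g hf2 hg2
end
end
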